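/- arXiv:1406.2820 — 2 statements merged into one kernel-verified Lean document; each statement's English description precedes it below -/
import Mathlib

section
/- The nullity theorem: if A ∈ ℂ^{n×n} is invertible and α, β are nonempty proper subsets of {1,...,n}, then rank(A⁻¹(α; β)) = rank(A({1,...,n}∖β; {1,...,n}∖α)) + |α| + |β| − n. -/
open Matrix

namespace NullityAux

variable {n : ℕ}

/-- Extension by zero of a vector indexed by a subset. -/
noncomputable def extMap (s : Finset (Fin n)) : ({i // i ∈ s} → ℂ) →ₗ[ℂ] (Fin n → ℂ) where
  toFun x i := if h : i ∈ s then x ⟨i, h⟩ else 0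
  map_add' x y := by
    ext i; by_cases h : i ∈ s <;> simp [h]
  map_smul' c x := by
    ext i; by_cases h : i ∈ s <;> simp [h]

/-- Restriction of a vector to a subset. -/
noncomputable def resMap (s : Finset (Fin n)) : (Fin n → ℂ) →ₗ[ℂ] ({i // i ∈ s} → ℂ) :=
  LinearMap.funLeft ℂ ℂ (fun i : {i // i ∈ s} => (i : Fin n))

@[simp] lemma extMap_apply (s : Finset (Fin n)) (x : {i // i ∈ s} → ℂ) (i : Fin n) :
    extMap s x i = if h : i ∈ s then x ⟨i, h⟩ else 0 := rfl

@[simp] lemma resMap_apply (s : Finset (Fin n)) (v : Fin n → ℂ) (i : {i // i ∈ s}) :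
    resMap s v i = v i := rfl

lemma res_ext (s : Finset (Fin n)) (x : {i // i ∈ s} → ℂ) :
    resMap s (extMap s x) = x := by
  ext i
  simp [i.2]

lemma ext_res (s : Finset (Fin n)) (v : Fin n → ℂ) (hv : ∀ i ∉ s, v i = 0) :
    extMap s (resMap s v) = v := by
  ext i
  by_cases h : i ∈ s <;> simp [h, hv]

lemma mulVec_extMap (M : Matrix (Fin n) (Fin n) ℂ) (s : Finset (Fin n))
    (x : {j // j ∈ s} → ℂ) (i : Fin n) :
    M.mulVec (extMap s x) i = ∑ j : {j // j ∈ s}, M i j * x j := by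
  classical
  have h1 : M.mulVec (extMap s x) i
      = ∑ j : Fin n, if h : j ∈ s then M i j * x ⟨j, h⟩ else 0 := by
    simp only [Matrix.mulVec, dotProduct, extMap_apply]
    refine Finset.sum_congr rfl fun j _ => ?_
    by_cases h : j ∈ s <;> simp [h]
  rw [h1, ← Finset.sum_subset s.subset_univ (by intro j _ hj; simp [hj]),
    ← Finset.sum_attach s (fun j => if h : j ∈ s then M i j * x ⟨j, h⟩ else 0),
    Finset.univ_eq_attach]
  refine Finset.sum_congr rfl fun j _ => ?_
  simp [j.2]

lemma submatrix_mulVec (M : Matrix (Fin n) (Fin n) ℂ) (s t : Finset (Fin n))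
    (x : {j // j ∈ t} → ℂ) (i : {i // i ∈ s}) :
    (M.submatrix (fun i : {i // i ∈ s} => (i : Fin n))
      (fun j : {j // j ∈ t} => (j : Fin n))).mulVec x i
      = M.mulVec (extMap t x) (i : Fin n) := by
  rw [mulVec_extMap]
  simp [Matrix.mulVec, dotProduct]

end NullityAux

open NullityAux

/-- The nullity theorem: for an invertible `A : ℂ^{n×n}` and nonempty proper
subsets `α, β` of the index set,
`rank(A⁻¹(α;β)) = rank(A(βᶜ;αᶜ)) + |α| + |β| − n`
(stated additively to avoid natural subtraction). -/
theorem stmt2 (n : ℕ) (A : Matrix (Fin n) (Fin n) ℂ) (hA : IsUnit A.det)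
    (α β : Finset (Fin n))
    (hα : α.Nonempty) (hα' : α ≠ Finset.univ)
    (hβ : β.Nonempty) (hβ' : β ≠ Finset.univ) :
    ((A⁻¹).submatrix (fun i : {i // i ∈ α} => (i : Fin n))
        (fun j : {j // j ∈ β} => (j : Fin n))).rank + n =
      (A.submatrix (fun i : {i // i ∈ βᶜ} => (i : Fin n))
        (fun j : {j // j ∈ αᶜ} => (j : Fin n))).rank + α.card + β.card := by
  classical
  set B := A⁻¹ with hBdef
  have hAB : A * B = 1 := Matrix.mul_nonsing_inv A hA
  have hBA : B * A = 1 := Matrix.nonsing_inv_mul A hA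
  set M1 := (B.submatrix (fun i : {i // i ∈ α} => (i : Fin n))
      (fun j : {j // j ∈ β} => (j : Fin n))) with hM1
  set M2 := (A.submatrix (fun i : {i // i ∈ βᶜ} => (i : Fin n))
      (fun j : {j // j ∈ αᶜ} => (j : Fin n))) with hM2
  set K1 := LinearMap.ker M1.mulVecLin with hK1
  set K2 := LinearMap.ker M2.mulVecLin with hK2
  -- the two maps between kernels
  let Φ : ({j // j ∈ β} → ℂ) →ₗ[ℂ] ({i // i ∈ αᶜ} → ℂ) :=
    (resMap αᶜ) ∘ₗ B.mulVecLin ∘ₗ extMap β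
  let Ψ : ({i // i ∈ αᶜ} → ℂ) →ₗ[ℂ] ({j // j ∈ β} → ℂ) :=
    (resMap β) ∘ₗ A.mulVecLin ∘ₗ extMap αᶜ
  -- key support facts
  have hsupp1 : ∀ x ∈ K1, ∀ i ∉ αᶜ, B.mulVec (extMap β x) i = 0 := by
    intro x hx i hi
    have hiα : i ∈ α := by simpa using hi
    have := congrFun (hx : M1.mulVecLin x = 0) ⟨i, hiα⟩
    rw [Matrix.mulVecLin_apply] at this
    rw [← submatrix_mulVec B α β x ⟨i, hiα⟩]
    simpa using this
  have hext1 : ∀ x ∈ K1, extMap αᶜ (Φ x) = B.mulVec (extMap β x) := by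
    intro x hx
    exact ext_res αᶜ _ (hsupp1 x hx)
  have hsupp2 : ∀ y ∈ K2, ∀ i ∉ β, A.mulVec (extMap αᶜ y) i = 0 := by
    intro y hy i hi
    have hiβ : i ∈ βᶜ := by simpa using hi
    have := congrFun (hy : M2.mulVecLin y = 0) ⟨i, hiβ⟩
    rw [Matrix.mulVecLin_apply] at this
    rw [← submatrix_mulVec A βᶜ αᶜ y ⟨i, hiβ⟩]
    simpa using this
  have hext2 : ∀ y ∈ K2, extMap β (Ψ y) = A.mulVec (extMap αᶜ y) := by
    intro y hy
    exact ext_res β _ (hsupp2 y hy)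
  -- Φ maps K1 into K2
  have hΦ : ∀ x ∈ K1, Φ x ∈ K2 := by
    intro x hx
    rw [hK2, LinearMap.mem_ker]
    ext i
    rw [Matrix.mulVecLin_apply]
    have : M2.mulVec (Φ x) i = A.mulVec (extMap αᶜ (Φ x)) (i : Fin n) :=
      submatrix_mulVec A βᶜ αᶜ (Φ x) i
    rw [this, hext1 x hx, Matrix.mulVec_mulVec, hAB, Matrix.one_mulVec]
    simp [Finset.mem_compl.mp i.2]
  -- Ψ maps K2 into K1
  have hΨ : ∀ y ∈ K2, Ψ y ∈ K1 := by
    intro y hy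
    rw [hK1, LinearMap.mem_ker]
    ext i
    rw [Matrix.mulVecLin_apply]
    have : M1.mulVec (Ψ y) i = B.mulVec (extMap β (Ψ y)) (i : Fin n) :=
      submatrix_mulVec B α β (Ψ y) i
    rw [this, hext2 y hy, Matrix.mulVec_mulVec, hBA, Matrix.one_mulVec]
    have hni : (i : Fin n) ∉ αᶜ := by simp [Finset.mem_compl, i.2]
    simp [hni]
  -- Ψ ∘ Φ = id on K1
  have hΨΦ : ∀ x ∈ K1, Ψ (Φ x) = x := by
    intro x hx
    show (resMap β) (A.mulVec (extMap αᶜ (Φ x))) = x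
    rw [hext1 x hx, Matrix.mulVec_mulVec, hAB, Matrix.one_mulVec, res_ext]
  -- Φ ∘ Ψ = id on K2
  have hΦΨ : ∀ y ∈ K2, Φ (Ψ y) = y := by
    intro y hy
    show (resMap αᶜ) (B.mulVec (extMap β (Ψ y))) = y
    rw [hext2 y hy, Matrix.mulVec_mulVec, hBA, Matrix.one_mulVec, res_ext]
  -- linear equivalence between kernels
  let e : K1 ≃ₗ[ℂ] K2 :=
    LinearEquiv.ofLinear (Φ.restrict hΦ) (Ψ.restrict hΨ)
      (by
        refine LinearMap.ext fun y => Subtype.ext ?_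
        simp only [LinearMap.coe_comp, Function.comp_apply, LinearMap.restrict_apply,
          LinearMap.id_coe, id_eq]
        exact hΦΨ y y.2)
      (by
        refine LinearMap.ext fun x => Subtype.ext ?_
        simp only [LinearMap.coe_comp, Function.comp_apply, LinearMap.restrict_apply,
          LinearMap.id_coe, id_eq]
        exact hΨΦ x x.2)
  have hkers : Module.finrank ℂ K1 = Module.finrank ℂ K2 := e.finrank_eq
  -- rank-nullity
  have r1 : M1.rank + Module.finrank ℂ K1 = β.card := by
    have := LinearMap.finrank_range_add_finrank_ker M1.mulVecLin
    rw [Module.finrank_fintype_fun_eq_card, Fintype.card_coe] at this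
    exact this
  have r2 : M2.rank + Module.finrank ℂ K2 = (αᶜ).card := by
    have := LinearMap.finrank_range_add_finrank_ker M2.mulVecLin
    rw [Module.finrank_fintype_fun_eq_card, Fintype.card_coe] at this
    exact this
  have hcard : (αᶜ).card = n - α.card := by
    rw [Finset.card_compl]; simp
  have hle : α.card ≤ n := by
    have := Finset.card_le_univ α; simpa using this
  omega
end

section
/- Staircase form is preserved under one step of the QR iteration: if A − ρI = QR with Q unitary, R upper triangular invertible, and A is staircase, then A' = Qᴴ A Q satisfies m_j(A') ≤ m_j(A) for all 1 ≤ j ≤ n. -/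
open Matrix

/-- The (0-based) staircase profile function
`m_j(A) = max{j, max{i > j : A i j ≠ 0}}`. -/
noncomputable def mrow {n : ℕ} (A : Matrix (Fin n) (Fin n) ℂ) (j : Fin n) : ℕ :=
  max j.val (sSup {i : ℕ | ∃ h : i < n, j.val < i ∧ A ⟨i, h⟩ j ≠ 0})

lemma mrow_ge {n : ℕ} (A : Matrix (Fin n) (Fin n) ℂ) (j : Fin n) : j.val ≤ mrow A j :=
  le_max_left _ _

lemma apply_eq_zero_of_mrow_lt {n : ℕ} (A : Matrix (Fin n) (Fin n) ℂ) (i j : Fin n)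
    (h : mrow A j < i.val) : A i j = 0 := by
  by_contra hne
  have hji : j.val < i.val := lt_of_le_of_lt (mrow_ge A j) h
  have hmem : i.val ∈ {i : ℕ | ∃ h : i < n, j.val < i ∧ A ⟨i, h⟩ j ≠ 0} :=
    ⟨i.isLt, hji, by simpa using hne⟩
  have hbdd : BddAbove {i : ℕ | ∃ h : i < n, j.val < i ∧ A ⟨i, h⟩ j ≠ 0} :=
    ⟨n, fun m hm => le_of_lt hm.1⟩
  have : i.val ≤ mrow A j := le_max_of_le_right (le_csSup hbdd hmem)
  omega

/-- One step of the shifted QR iteration preserves the staircase form: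
if `A − ρI = QR` and `A` is staircase, then `m_j(Qᴴ A Q) ≤ m_j(A)` for all `j`. -/
theorem stmt10 (n : ℕ) (A Q R : Matrix (Fin n) (Fin n) ℂ) (ρ : ℂ)
    (hstair : ∀ j k : Fin n, k ≤ j → mrow A k ≤ mrow A j)
    (hQ : Q ∈ Matrix.unitaryGroup (Fin n) ℂ)
    (hR : R.BlockTriangular (id : Fin n → Fin n))
    (hRinv : IsUnit R.det)
    (hQR : A - ρ • (1 : Matrix (Fin n) (Fin n) ℂ) = Q * R) :
    ∀ j : Fin n, mrow (Qᴴ * A * Q) j ≤ mrow A j := by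
  have : Invertible R := R.invertibleOfIsUnitDet hRinv
  have hRinvTri : (R⁻¹).BlockTriangular (id : Fin n → Fin n) :=
    blockTriangular_inv_of_blockTriangular hR
  have hQQ : Qᴴ * Q = 1 := hQ.1
  -- A' = R * (A - ρ•1) * R⁻¹ + ρ•1
  have hQeq : Q = (A - ρ • (1 : Matrix (Fin n) (Fin n) ℂ)) * R⁻¹ := by
    rw [hQR, Matrix.mul_assoc, Matrix.mul_nonsing_inv _ hRinv, Matrix.mul_one]
  have hA' : Qᴴ * A * Q = R * (A - ρ • (1 : Matrix (Fin n) (Fin n) ℂ)) * R⁻¹ +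
      ρ • (1 : Matrix (Fin n) (Fin n) ℂ) := by
    have h1 : A = Q * R + ρ • (1 : Matrix (Fin n) (Fin n) ℂ) := by
      rw [← hQR, sub_add_cancel]
    calc Qᴴ * A * Q = Qᴴ * (Q * R + ρ • (1 : Matrix (Fin n) (Fin n) ℂ)) * Q := by rw [← h1]
      _ = (Qᴴ * Q) * (R * Q) + ρ • (Qᴴ * Q) := by
          noncomm_ring
      _ = R * Q + ρ • (1 : Matrix (Fin n) (Fin n) ℂ) := by rw [hQQ]; simp
      _ = R * (A - ρ • (1 : Matrix (Fin n) (Fin n) ℂ)) * R⁻¹ +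
          ρ • (1 : Matrix (Fin n) (Fin n) ℂ) := by
          conv_lhs => rw [hQeq]
          rw [Matrix.mul_assoc]
  intro j
  apply max_le (mrow_ge A j)
  apply csSup_le'
  rintro i ⟨hi, hji, hne⟩
  by_contra hgt
  push_neg at hgt
  apply hne
  set i' : Fin n := ⟨i, hi⟩
  have hi' : mrow A j < i'.val := hgt
  rw [hA']
  have hij : i' ≠ j := by
    intro h
    have : i'.val = j.val := congrArg Fin.val h
    simp only [i'] at this
    omega
  simp only [Matrix.add_apply, Matrix.smul_apply, Matrix.one_apply_ne hij, smul_zero, add_zero]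
  rw [Matrix.mul_apply]
  apply Finset.sum_eq_zero
  intro k _
  by_cases hkj : (j : Fin n) < k
  · rw [hRinvTri hkj, mul_zero]
  · push_neg at hkj
    have hzero : (R * (A - ρ • (1 : Matrix (Fin n) (Fin n) ℂ))) i' k = 0 := by
      rw [Matrix.mul_apply]
      apply Finset.sum_eq_zero
      intro l _
      by_cases hli : l < i'
      · rw [hR hli, zero_mul]
      · push_neg at hli
        have hmk : mrow A k ≤ mrow A j := hstair j k hkj
        have hlk : mrow A k < l.val := by
          have : i'.val ≤ l.val := hli
          omega
        have hA0 : A l k = 0 := apply_eq_zero_of_mrow_lt A l k hlk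
        have hlkne : l ≠ k := by
          intro h
          have := mrow_ge A k
          rw [h] at hlk; omega
        simp [Matrix.sub_apply, hA0, Matrix.one_apply_ne hlkne]
    rw [hzero, zero_mul]
end
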